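/- Let s_1, ..., s_n be pairwise distinct real scores, b ≥ 1, and m1 < m2 ≤ n with m1 ≥ b. Then Top-b(s_1,...,s_{m2}) equals the top-b index set computed only over the union of Top-b(s_1,...,s_{m1}) and the fresh indices {m1+1,...,m2}. That is, chunked computation with eviction after each chunk yields exactly the same retained set as computing top-b over the full prefix. -/

import Mathlib

open Finset

/-- Top-b over an arbitrary finite index set `A`: the elements of `A` whose scores
are among the `min(b,|A|)` largest (unique when scores are pairwise distinct). -/
noncomputable def topBOn (s : ℕ → ℝ) (b : ℕ) (A : Finset ℕ) : Finset ℕ :=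
  A.filter fun j => (A.filter fun k => s j < s k).card < b

/-- `topB s b i` : top-b over the prefix `{1,…,i}`. -/
noncomputable def topB (s : ℕ → ℝ) (b i : ℕ) : Finset ℕ :=
  topBOn s b (Finset.Icc 1 i)

/-!
Only `C ∖ topBOn s b C` is dropped when `C ⊆ A` is pruned, and an element `t` of it is beaten
by every survivor of `C`, of which there are at least `b`. An index `j` beating such a `t`
therefore still sees `b` larger scores after the pruning, so its verdict does not change;
if `j` beats no dropped element, its set of larger scores is untouched.
-/

namespace TopB

variable {s : ℕ → ℝ} {b : ℕ} {A C : Finset ℕ} {j k t : ℕ}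

theorem mem_topBOn : j ∈ topBOn s b A ↔ j ∈ A ∧ #{k ∈ A | s j < s k} < b :=
  mem_filter

theorem topBOn_subset : topBOn s b A ⊆ A :=
  filter_subset _ _

theorem card_filter_lt_anti (h : s t ≤ s j) : #{k ∈ A | s j < s k} ≤ #{k ∈ A | s t < s k} :=
  card_le_card fun _ hk => mem_filter.2 ⟨(mem_filter.1 hk).1, h.trans_lt (mem_filter.1 hk).2⟩

theorem mem_topBOn_of_subset (hCA : C ⊆ A) (hjC : j ∈ C) (hj : j ∈ topBOn s b A) :
    j ∈ topBOn s b C :=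
  mem_topBOn.2 ⟨hjC, (card_le_card (filter_subset_filter _ hCA)).trans_lt (mem_topBOn.1 hj).2⟩

theorem lt_of_mem_topBOn_of_notMem (hk : k ∈ topBOn s b C) (htC : t ∈ C)
    (ht : t ∉ topBOn s b C) : s t < s k := by
  by_contra! hkt
  exact ht <| mem_topBOn.2 ⟨htC, (card_filter_lt_anti hkt).trans_lt (mem_topBOn.1 hk).2⟩

theorem le_card_topBOn_of_notMem (htC : t ∈ C) (ht : t ∉ topBOn s b C) :
    b ≤ #(topBOn s b C) := by
  obtain ⟨u, hu, hmax⟩ := (C \ topBOn s b C).exists_max_image s ⟨t, mem_sdiff.2 ⟨htC, ht⟩⟩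
  obtain ⟨huC, hu⟩ := mem_sdiff.1 hu
  have hsub : {k ∈ C | s u < s k} ⊆ topBOn s b C := by
    intro k hk
    obtain ⟨hkC, hlt⟩ := mem_filter.1 hk
    by_contra hkT
    exact (hmax k (mem_sdiff.2 ⟨hkC, hkT⟩)).not_gt hlt
  have hcard : b ≤ #{k ∈ C | s u < s k} := by
    by_contra! hlt
    exact hu (mem_topBOn.2 ⟨huC, hlt⟩)
  exact hcard.trans (card_le_card hsub)

theorem topBOn_union_sdiff_subset (hCA : C ⊆ A) : topBOn s b C ∪ A \ C ⊆ A :=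
  union_subset (topBOn_subset.trans hCA) sdiff_subset

theorem topBOn_topBOn_union_sdiff (hCA : C ⊆ A) :
    topBOn s b (topBOn s b C ∪ A \ C) = topBOn s b A := by
  set B := topBOn s b C ∪ A \ C
  have hBA : B ⊆ A := topBOn_union_sdiff_subset hCA
  ext j
  constructor
  · intro hj
    obtain ⟨hjB, hcount⟩ := mem_topBOn.1 hj
    refine mem_topBOn.2 ⟨hBA hjB, ?_⟩
    by_contra! hbA
    by_cases habove : {k ∈ A | s j < s k} ⊆ B
    · have hsame : {k ∈ B | s j < s k} = {k ∈ A | s j < s k} :=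
        (filter_subset_filter _ hBA).antisymm fun k hk =>
          mem_filter.2 ⟨habove hk, (mem_filter.1 hk).2⟩
      exact (hsame ▸ hcount).not_ge hbA
    · obtain ⟨t, htA, htB⟩ := not_subset.1 habove
      obtain ⟨htA, hjt⟩ := mem_filter.1 htA
      have htC : t ∈ C := by
        by_contra htC
        exact htB (mem_union_right _ (mem_sdiff.2 ⟨htA, htC⟩))
      have ht : t ∉ topBOn s b C := fun ht => htB (mem_union_left _ ht)
      have hsub : topBOn s b C ⊆ {k ∈ B | s j < s k} := fun k hk =>
        mem_filter.2 ⟨mem_union_left _ hk, hjt.trans (lt_of_mem_topBOn_of_notMem hk htC ht)⟩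
      exact hcount.not_ge ((le_card_topBOn_of_notMem htC ht).trans (card_le_card hsub))
  · intro hj
    have hjB : j ∈ B := by
      by_cases hjC : j ∈ C
      · exact mem_union_left _ (mem_topBOn_of_subset hCA hjC hj)
      · exact mem_union_right _ (mem_sdiff.2 ⟨topBOn_subset hj, hjC⟩)
    exact mem_topBOn_of_subset hBA hjB hj

theorem Icc_one_sdiff_Icc_one {m1 m2 : ℕ} : Icc 1 m2 \ Icc 1 m1 = Icc (m1 + 1) m2 := by
  ext k
  simp only [mem_sdiff, mem_Icc]
  omega

end TopB

theorem topB_chunked_general (s : ℕ → ℝ) (b m1 m2 : ℕ)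
    (h12 : m1 < m2) :
    topB s b m2 = topBOn s b (topB s b m1 ∪ Finset.Icc (m1 + 1) m2) := by
  have hsub : Icc 1 m1 ⊆ Icc 1 m2 := Icc_subset_Icc_right h12.le
  rw [← TopB.Icc_one_sdiff_Icc_one, topB, topB, TopB.topBOn_topBOn_union_sdiff hsub]

/-- chunked computation with eviction after each chunk yields exactly
the same retained set as computing top-b over the full prefix. -/
theorem topB_chunked (s : ℕ → ℝ) (n b m1 m2 : ℕ) (hb : 1 ≤ b)
    (hinj : Set.InjOn s (Set.Icc 1 n))
    (hbm1 : b ≤ m1) (h12 : m1 < m2) (h2n : m2 ≤ n) :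
    topB s b m2 = topBOn s b (topB s b m1 ∪ Finset.Icc (m1 + 1) m2) :=
  topB_chunked_general s b m1 m2 h12
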